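/- Let (k_1, …, k_r) and (l_1, …, l_s) be admissible indices. Suppose there is an index i with 1 ≤ i ≤ min(r,s) such that k_j = l_j for all j < i and k_i < l_i. Then ζ*(k_1, …, k_r) > ζ*(l_1, …, l_s). -/

import Mathlib

open scoped BigOperators

/-- The set of weakly decreasing tuples of positive integers of length `r`. -/
def DecTuple (r : ℕ) : Set (Fin r → ℕ) :=
  {f | (∀ i, 1 ≤ f i) ∧ ∀ i j : Fin r, i ≤ j → f j ≤ f i}

/-- The multiple zeta-star value of an index `k`. -/
noncomputable def zetaStar {r : ℕ} (k : Fin r → ℕ) : ℝ :=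
  ∑' f : DecTuple r, ∏ i, (((f : Fin r → ℕ) i : ℝ) ^ (k i))⁻¹

/-!
Truncate the sum at `n₁ ≤ n`. The truncations satisfy
`ζ*_n(k₁, k') = ∑_{m ≤ n} m^{-k₁} ζ*_m(k')` and `1 ≤ ζ*_n(k) ≤ n`, with `ζ*_n(k) < n` for `n ≥ 2`.
If `k₁ < l₁` this gives, termwise, `m^{-l₁} ζ*_m(l') ≤ m^{1-l₁} ≤ m^{-k₁} ≤ m^{-k₁} ζ*_m(k')`,
strictly at `m = 2`; equal leading entries carry the comparison one level up. So there is a fixed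
`δ > 0` with `ζ*_n(l) + δ ≤ ζ*_n(k)` for all `n ≥ 2`, and in the limit `ζ*(l) ≤ ζ*(k) - δ`.
The series `ζ*(k)` converges for admissible `k` because each of its terms is at most
`∏ nᵢ^{-(1 + 1/r)}`.
-/

open Finset

section Elementary

variable {m x y : ℝ} {c d : ℕ}

theorem inv_pow_mul_self_le (hm : 1 ≤ m) (hcd : c < d) : (m ^ d)⁻¹ * m ≤ (m ^ c)⁻¹ :=
  calc (m ^ d)⁻¹ * m ≤ (m ^ (c + 1))⁻¹ * m := by gcongr; exact hcd
    _ = (m ^ c)⁻¹ := by rw [pow_succ, mul_inv, inv_mul_cancel_right₀ (by positivity)]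

theorem inv_pow_mul_le_inv_pow_mul (hm : 1 ≤ m) (hcd : c < d) (hx : x ≤ m) (hy : 1 ≤ y) :
    (m ^ d)⁻¹ * x ≤ (m ^ c)⁻¹ * y :=
  calc (m ^ d)⁻¹ * x ≤ (m ^ d)⁻¹ * m := by gcongr
    _ ≤ (m ^ c)⁻¹ := inv_pow_mul_self_le hm hcd
    _ ≤ (m ^ c)⁻¹ * y := le_mul_of_one_le_right (by positivity) hy

theorem inv_pow_mul_lt_inv_pow_mul (hm : 1 ≤ m) (hcd : c < d) (hx : x < m) (hy : 1 ≤ y) :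
    (m ^ d)⁻¹ * x < (m ^ c)⁻¹ * y :=
  calc (m ^ d)⁻¹ * x < (m ^ d)⁻¹ * m := mul_lt_mul_of_pos_left hx (by positivity)
    _ ≤ (m ^ c)⁻¹ := inv_pow_mul_self_le hm hcd
    _ ≤ (m ^ c)⁻¹ * y := le_mul_of_one_le_right (by positivity) hy

theorem inv_pow_mul_le_one (hm : 1 ≤ m) (hd : 0 < d) (hx : x ≤ m) : (m ^ d)⁻¹ * x ≤ 1 := by
  simpa using inv_pow_mul_le_inv_pow_mul hm hd hx le_rfl

theorem inv_pow_mul_lt_one (hm : 1 ≤ m) (hd : 0 < d) (hx : x < m) : (m ^ d)⁻¹ * x < 1 := by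
  simpa using inv_pow_mul_lt_inv_pow_mul hm hd hx le_rfl

theorem sum_Icc_add_le_sum_Icc {f g : ℕ → ℝ} {δ : ℝ} {n : ℕ} (hfg : ∀ m ∈ Icc 1 n, f m ≤ g m)
    (h2 : f 2 + δ ≤ g 2) (hn : 2 ≤ n) : ∑ m ∈ Icc 1 n, f m + δ ≤ ∑ m ∈ Icc 1 n, g m := by
  have h := single_le_sum (f := g - f) (fun m hm => sub_nonneg.2 (hfg m hm))
    (mem_Icc.2 ⟨one_le_two, hn⟩)
  simp only [Pi.sub_apply, sum_sub_distrib] at h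
  linarith

end Elementary

def decTuplesUpTo (t n : ℕ) : Finset (Fin t → ℕ) :=
  {f ∈ Fintype.piFinset fun _ => Icc 1 n | ∀ i j : Fin t, i ≤ j → f j ≤ f i}

noncomputable def zetaStarTrunc {t : ℕ} (k : Fin t → ℕ) (n : ℕ) : ℝ :=
  ∑ f ∈ decTuplesUpTo t n, ∏ i, ((f i : ℝ) ^ k i)⁻¹

section Truncation

variable {t n : ℕ}

theorem mem_decTuplesUpTo {f : Fin t → ℕ} :
    f ∈ decTuplesUpTo t n ↔ f ∈ DecTuple t ∧ ∀ i, f i ≤ n := by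
  simp only [decTuplesUpTo, DecTuple, mem_filter, Fintype.mem_piFinset, mem_Icc,
    Set.mem_ofPred_eq, forall_and]
  tauto

theorem cons_mem_decTuplesUpTo {m : ℕ} {g : Fin t → ℕ} :
    Fin.cons m g ∈ decTuplesUpTo (t + 1) n ↔ m ∈ Icc 1 n ∧ g ∈ decTuplesUpTo t m := by
  simp only [mem_decTuplesUpTo, DecTuple, Set.mem_ofPred_eq, Fin.forall_fin_succ, Fin.cons_zero,
    Fin.cons_succ, mem_Icc, Fin.succ_le_succ_iff, Fin.le_zero_iff, Fin.succ_ne_zero, le_refl,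
    Fin.zero_le, forall_true_left, false_implies, implies_true, true_and]
  exact ⟨fun ⟨⟨⟨hm, hg⟩, hgm, hanti⟩, hmn, _⟩ => ⟨⟨hm, hmn⟩, ⟨hg, hanti⟩, hgm⟩,
    fun ⟨⟨hm, hmn⟩, ⟨hg, hanti⟩, hgm⟩ => ⟨⟨⟨hm, hg⟩, hgm, hanti⟩, hmn, fun i => (hgm i).trans hmn⟩⟩

theorem zetaStarTrunc_of_length_zero (k : Fin 0 → ℕ) (n : ℕ) : zetaStarTrunc k n = 1 := by
  simp [zetaStarTrunc, decTuplesUpTo]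

theorem zetaStarTrunc_succ (k : Fin (t + 1) → ℕ) (n : ℕ) :
    zetaStarTrunc k n = ∑ m ∈ Icc 1 n, ((m : ℝ) ^ k 0)⁻¹ * zetaStarTrunc (Fin.tail k) m := by
  simp_rw [zetaStarTrunc, mul_sum]
  rw [sum_sigma']
  refine sum_nbij' (fun f => ⟨f 0, Fin.tail f⟩) (fun x => Fin.cons x.1 x.2) ?_ ?_ ?_ ?_ ?_
  · intro f hf
    rw [← Fin.cons_self_tail f, cons_mem_decTuplesUpTo] at hf
    exact mem_sigma.2 hf
  · intro x hx
    exact cons_mem_decTuplesUpTo.2 (mem_sigma.1 hx)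
  · intro f _
    exact Fin.cons_self_tail f
  · intro x _
    simp
  · intro f _
    rw [Fin.prod_univ_succ]
    rfl

theorem zetaStarTrunc_nonneg (k : Fin t → ℕ) (n : ℕ) : 0 ≤ zetaStarTrunc k n :=
  sum_nonneg fun _ _ => prod_nonneg fun _ _ => by positivity

theorem one_le_zetaStarTrunc (k : Fin t → ℕ) (hn : 1 ≤ n) : 1 ≤ zetaStarTrunc k n := by
  have hone : (fun _ => 1 : Fin t → ℕ) ∈ decTuplesUpTo t n :=
    mem_decTuplesUpTo.2 ⟨⟨fun _ => le_rfl, fun _ _ _ => le_rfl⟩, fun _ => hn⟩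
  refine Eq.trans_le ?_ (single_le_sum (f := fun f => ∏ i, ((f i : ℝ) ^ k i)⁻¹)
    (fun f _ => prod_nonneg fun i _ => by positivity) hone)
  simp

theorem zetaStarTrunc_le_self {k : Fin t → ℕ} (hk : ∀ i, 1 ≤ k i) (hn : 1 ≤ n) :
    zetaStarTrunc k n ≤ n := by
  induction t generalizing n with
  | zero => rw [zetaStarTrunc_of_length_zero]; exact_mod_cast hn
  | succ t ih =>
    rw [zetaStarTrunc_succ]
    have hk' : ∀ i, 1 ≤ Fin.tail k i := fun i => hk i.succ
    calc _ ≤ ∑ m ∈ Icc 1 n, (1 : ℝ) := sum_le_sum fun m hm => ?_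
      _ = n := by simp
    have hm : 1 ≤ m := (mem_Icc.1 hm).1
    exact inv_pow_mul_le_one (by exact_mod_cast hm) (hk 0) (ih hk' hm)

theorem zetaStarTrunc_lt_self {k : Fin t → ℕ} (hk : ∀ i, 1 ≤ k i) (hn : 2 ≤ n) :
    zetaStarTrunc k n < n := by
  induction t generalizing n with
  | zero => rw [zetaStarTrunc_of_length_zero]; exact_mod_cast hn
  | succ t ih =>
    rw [zetaStarTrunc_succ]
    have hk' : ∀ i, 1 ≤ Fin.tail k i := fun i => hk i.succ
    calc _ < ∑ m ∈ Icc 1 n, (1 : ℝ) :=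
          sum_lt_sum (fun m hm => ?_) ⟨2, mem_Icc.2 ⟨one_le_two, hn⟩, ?_⟩
      _ = n := by simp
    · have hm : 1 ≤ m := (mem_Icc.1 hm).1
      exact inv_pow_mul_le_one (by exact_mod_cast hm) (hk 0) (zetaStarTrunc_le_self hk' hm)
    · exact inv_pow_mul_lt_one (m := ((2 : ℕ) : ℝ)) (by norm_num) (hk 0)
        (by exact_mod_cast ih hk' le_rfl)

end Truncation

section Comparison

variable {p q : ℕ}

theorem zetaStarTrunc_le_add_of_head (a : Fin (p + 1) → ℕ) (b : Fin (q + 1) → ℕ) {δ : ℝ}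
    (hle : ∀ m : ℕ, 1 ≤ m → ((m : ℝ) ^ b 0)⁻¹ * zetaStarTrunc (Fin.tail b) m ≤
      ((m : ℝ) ^ a 0)⁻¹ * zetaStarTrunc (Fin.tail a) m)
    (h2 : ((2 : ℝ) ^ b 0)⁻¹ * zetaStarTrunc (Fin.tail b) 2 + δ ≤
      ((2 : ℝ) ^ a 0)⁻¹ * zetaStarTrunc (Fin.tail a) 2) :
    (∀ n, zetaStarTrunc b n ≤ zetaStarTrunc a n) ∧
      ∀ n, 2 ≤ n → zetaStarTrunc b n + δ ≤ zetaStarTrunc a n := by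
  simp only [zetaStarTrunc_succ]
  exact ⟨fun n => sum_le_sum fun m hm => hle m (mem_Icc.1 hm).1,
    fun n hn => sum_Icc_add_le_sum_Icc (fun m hm => hle m (mem_Icc.1 hm).1)
      (by exact_mod_cast h2) hn⟩

theorem exists_pos_zetaStarTrunc_add_le (i : ℕ) (a : Fin p → ℕ) (b : Fin q → ℕ)
    (hb : ∀ j, 1 ≤ b j) (hip : i < p) (hiq : i < q)
    (heq : ∀ j (hj : j < i), a ⟨j, by omega⟩ = b ⟨j, by omega⟩)
    (hlt : a ⟨i, hip⟩ < b ⟨i, hiq⟩) :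
    ∃ δ > 0, (∀ n, zetaStarTrunc b n ≤ zetaStarTrunc a n) ∧
      ∀ n, 2 ≤ n → zetaStarTrunc b n + δ ≤ zetaStarTrunc a n := by
  induction i generalizing p q with
  | zero =>
    obtain ⟨p, rfl⟩ := Nat.exists_eq_add_one_of_ne_zero (by omega : p ≠ 0)
    obtain ⟨q, rfl⟩ := Nat.exists_eq_add_one_of_ne_zero (by omega : q ≠ 0)
    have hb' : ∀ j, 1 ≤ Fin.tail b j := fun j => hb j.succ
    have hlt : a 0 < b 0 := hlt
    refine ⟨((2 : ℝ) ^ a 0)⁻¹ * zetaStarTrunc (Fin.tail a) 2 -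
      ((2 : ℝ) ^ b 0)⁻¹ * zetaStarTrunc (Fin.tail b) 2, ?_,
      zetaStarTrunc_le_add_of_head a b (fun m hm => ?_) (by linarith)⟩
    · exact sub_pos.2 <| inv_pow_mul_lt_inv_pow_mul one_le_two hlt
        (by exact_mod_cast zetaStarTrunc_lt_self hb' le_rfl) (one_le_zetaStarTrunc _ one_le_two)
    · exact inv_pow_mul_le_inv_pow_mul (by exact_mod_cast hm) hlt
        (zetaStarTrunc_le_self hb' hm) (one_le_zetaStarTrunc _ hm)
  | succ i ih =>
    obtain ⟨p, rfl⟩ := Nat.exists_eq_add_one_of_ne_zero (by omega : p ≠ 0)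
    obtain ⟨q, rfl⟩ := Nat.exists_eq_add_one_of_ne_zero (by omega : q ≠ 0)
    have hhead : a 0 = b 0 := heq 0 (Nat.succ_pos i)
    obtain ⟨δ, hδ, hle, hgap⟩ := ih (Fin.tail a) (Fin.tail b) (fun j => hb j.succ)
      (by omega) (by omega) (fun j hj => heq (j + 1) (by omega)) hlt
    refine ⟨((2 : ℝ) ^ a 0)⁻¹ * δ, by positivity,
      zetaStarTrunc_le_add_of_head a b (fun m _ => ?_) ?_⟩
    · rw [hhead]
      exact mul_le_mul_of_nonneg_left (hle m) (by positivity)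
    · rw [hhead, ← mul_add]
      exact mul_le_mul_of_nonneg_left (by exact_mod_cast hgap 2 le_rfl) (by positivity)

end Comparison

section Summation

variable {t : ℕ}

theorem exists_sum_le_zetaStarTrunc (k : Fin t → ℕ) (u : Finset (DecTuple t)) :
    ∃ N, ∀ n, N ≤ n →
      ∑ f ∈ u, ∏ i, (((f : Fin t → ℕ) i : ℝ) ^ k i)⁻¹ ≤ zetaStarTrunc k n := by
  classical
  refine ⟨u.sup fun f => univ.sup (f : Fin t → ℕ), fun n hn => ?_⟩
  have hsub : u ⊆ (decTuplesUpTo t n).subtype (· ∈ DecTuple t) := fun f hf =>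
    mem_subtype.2 <| mem_decTuplesUpTo.2 ⟨f.2, fun i =>
      (le_sup (f := (f : Fin t → ℕ)) (mem_univ i)).trans
        ((le_sup (f := fun f : DecTuple t => univ.sup (f : Fin t → ℕ)) hf).trans hn)⟩
  rw [zetaStarTrunc, ← sum_subtype_of_mem _ fun f hf => (mem_decTuplesUpTo.1 hf).1]
  exact sum_le_sum_of_subset_of_nonneg hsub fun _ _ _ => prod_nonneg fun _ _ => by positivity

theorem zetaStar_le_of_zetaStarTrunc_le (k : Fin t → ℕ) {N : ℕ} {c : ℝ}
    (h : ∀ n, N ≤ n → zetaStarTrunc k n ≤ c) : zetaStar k ≤ c := by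
  -- no summability is needed: a non-summable family has `tsum = 0 ≤ c`
  refine tsum_le_of_sum_le' ((zetaStarTrunc_nonneg k N).trans (h N le_rfl)) fun u => ?_
  obtain ⟨M, hM⟩ := exists_sum_le_zetaStarTrunc k u
  exact (hM (max M N) (le_max_left M N)).trans (h _ (le_max_right M N))

theorem summable_of_zetaStarTrunc_le (k : Fin t → ℕ) {c : ℝ}
    (h : ∀ n, zetaStarTrunc k n ≤ c) :
    Summable fun f : DecTuple t => ∏ i, (((f : Fin t → ℕ) i : ℝ) ^ k i)⁻¹ := by
  refine summable_of_sum_le (c := c) (fun _ => prod_nonneg fun _ _ => by positivity) fun u => ?_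
  obtain ⟨M, hM⟩ := exists_sum_le_zetaStarTrunc k u
  exact (hM M le_rfl).trans (h M)

theorem zetaStarTrunc_le_zetaStar_of_summable (k : Fin t → ℕ)
    (hk : Summable fun f : DecTuple t => ∏ i, (((f : Fin t → ℕ) i : ℝ) ^ k i)⁻¹) (n : ℕ) :
    zetaStarTrunc k n ≤ zetaStar k := by
  classical
  rw [zetaStarTrunc, ← sum_subtype_of_mem _ fun f hf => (mem_decTuplesUpTo.1 hf).1]
  exact hk.sum_le_tsum _ fun _ _ => prod_nonneg fun _ _ => by positivity

end Summation

section Admissible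

variable {r : ℕ} {f k : Fin (r + 1) → ℕ}

theorem prod_le_head_pow (hf : f ∈ DecTuple (r + 1)) : ∏ i, f i ≤ f 0 ^ (r + 1) := by
  simpa using prod_le_pow_card univ f (f 0) fun i _ => hf.2 0 i (Fin.zero_le i)

theorem head_mul_prod_le_prod_pow (hf : f ∈ DecTuple (r + 1)) (hk0 : 2 ≤ k 0)
    (hk : ∀ i, 1 ≤ k i) : f 0 * ∏ i, f i ≤ ∏ i, f i ^ k i := by
  rw [Fin.prod_univ_succ, Fin.prod_univ_succ fun i => f i ^ k i, ← mul_assoc, ← sq]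
  exact Nat.mul_le_mul (Nat.pow_le_pow_right (hf.1 0) hk0)
    (prod_le_prod' fun i _ => Nat.le_self_pow (by have := hk i.succ; omega) _)

theorem prod_inv_pow_le_prod_inv_rpow (hf : f ∈ DecTuple (r + 1)) (hk0 : 2 ≤ k 0)
    (hk : ∀ i, 1 ≤ k i) :
    ∏ i, ((f i : ℝ) ^ k i)⁻¹ ≤ ∏ i, ((f i : ℝ) ^ (1 + (r + 1 : ℝ)⁻¹))⁻¹ := by
  set P : ℝ := ∏ i, (f i : ℝ) with hP
  have hP1 : 1 ≤ P := by
    rw [hP]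
    exact_mod_cast one_le_prod' fun i _ => hf.1 i
  have hroot : P ^ (r + 1 : ℝ)⁻¹ ≤ f 0 :=
    calc P ^ (r + 1 : ℝ)⁻¹ ≤ ((f 0 : ℝ) ^ (r + 1)) ^ ((r + 1 : ℕ) : ℝ)⁻¹ := by
          push_cast
          gcongr
          rw [hP]
          exact_mod_cast prod_le_head_pow hf
      _ = f 0 := Real.pow_rpow_inv_natCast (by positivity) (Nat.succ_ne_zero r)
  have hpow : P ^ (1 + (r + 1 : ℝ)⁻¹) ≤ ∏ i, (f i : ℝ) ^ k i :=
    calc P ^ (1 + (r + 1 : ℝ)⁻¹) = P * P ^ (r + 1 : ℝ)⁻¹ := by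
          rw [Real.rpow_add (by positivity), Real.rpow_one]
      _ ≤ P * f 0 := by gcongr
      _ ≤ ∏ i, (f i : ℝ) ^ k i := by
          rw [mul_comm, hP]
          exact_mod_cast head_mul_prod_le_prod_pow hf hk0 hk
  rw [prod_inv_distrib, prod_inv_distrib, Real.finsetProd_rpow _ _ fun i _ => by positivity]
  exact inv_anti₀ (by positivity) hpow

theorem zetaStarTrunc_le_tsum_pow (hk0 : 2 ≤ k 0) (hk : ∀ i, 1 ≤ k i) (n : ℕ) :
    zetaStarTrunc k n ≤ (∑' m : ℕ, ((m : ℝ) ^ (1 + (r + 1 : ℝ)⁻¹))⁻¹) ^ (r + 1) := by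
  set s : ℝ := 1 + (r + 1 : ℝ)⁻¹
  have hs : Summable fun m : ℕ => ((m : ℝ) ^ s)⁻¹ :=
    Real.summable_nat_rpow_inv.2 (lt_add_of_pos_right 1 (by positivity))
  calc zetaStarTrunc k n ≤ ∑ f ∈ decTuplesUpTo (r + 1) n, ∏ i, ((f i : ℝ) ^ s)⁻¹ :=
        sum_le_sum fun f hf => prod_inv_pow_le_prod_inv_rpow (mem_decTuplesUpTo.1 hf).1 hk0 hk
    _ ≤ ∑ f ∈ Fintype.piFinset fun _ => Icc 1 n, ∏ i, ((f i : ℝ) ^ s)⁻¹ :=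
        sum_le_sum_of_subset_of_nonneg (filter_subset _ _)
          fun _ _ _ => prod_nonneg fun _ _ => by positivity
    _ = (∑ m ∈ Icc 1 n, ((m : ℝ) ^ s)⁻¹) ^ (r + 1) := by
        rw [← prod_univ_sum (fun _ => Icc 1 n) fun _ m => ((m : ℝ) ^ s)⁻¹, prod_const,
          card_univ, Fintype.card_fin]
    _ ≤ (∑' m : ℕ, ((m : ℝ) ^ s)⁻¹) ^ (r + 1) := by
        gcongr
        exact hs.sum_le_tsum _ fun _ _ => by positivity

theorem zetaStarTrunc_le_zetaStar (hk0 : 2 ≤ k 0) (hk : ∀ i, 1 ≤ k i) (n : ℕ) :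
    zetaStarTrunc k n ≤ zetaStar k :=
  zetaStarTrunc_le_zetaStar_of_summable k
    (summable_of_zetaStarTrunc_le k (zetaStarTrunc_le_tsum_pow hk0 hk)) n

end Admissible

/-- Positions are 0-based: `i` is the paper's `i - 1`. -/
theorem stmt3 (r s : ℕ) (hr : 1 ≤ r)
    (k : Fin r → ℕ) (l : Fin s → ℕ)
    (hkadm : 2 ≤ k ⟨0, by omega⟩) (hkpos : ∀ i, 1 ≤ k i)
    (hlpos : ∀ i, 1 ≤ l i)
    (i : ℕ) (hir : i < r) (his : i < s)
    (heq : ∀ j : ℕ, (hj : j < i) → k ⟨j, by omega⟩ = l ⟨j, by omega⟩)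
    (hlt : k ⟨i, hir⟩ < l ⟨i, his⟩) :
    zetaStar l < zetaStar k := by
  obtain ⟨δ, hδ, -, hgap⟩ := exists_pos_zetaStarTrunc_add_le i k l hlpos hir his heq hlt
  obtain ⟨r, rfl⟩ := Nat.exists_eq_add_one_of_ne_zero (by omega : r ≠ 0)
  have hl : zetaStar l ≤ zetaStar k - δ := zetaStar_le_of_zetaStarTrunc_le l fun n hn => by
    linarith [hgap n hn, zetaStarTrunc_le_zetaStar hkadm hkpos n]
  linarith
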